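/- The twistor vectors satisfy the Clifford anticommutation relations: for every X ∈ ℝ⁸ and all i, j ∈ {0,…,7}, in Cl₈ one has ι(X_i)·ι(X_j) + ι(X_j)·ι(X_i) = −2·‖X‖²·δ_{ij}. -/

import Mathlib

noncomputable section

open scoped Quaternion TensorProduct

/-- The octonions, realized as the Cayley–Dickson double of the quaternions. -/
def Oct : Type := ℍ × ℍ

namespace Oct

instance : AddCommGroup Oct := inferInstanceAs (AddCommGroup (ℍ × ℍ))
instance : Module ℝ Oct := inferInstanceAs (Module ℝ (ℍ × ℍ))

/-- First (quaternionic) component. -/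
def x (p : Oct) : ℍ := Prod.fst p
/-- Second (quaternionic) component. -/
def y (p : Oct) : ℍ := Prod.snd p
/-- Build an octonion from two quaternions. -/
def mk (a b : ℍ) : Oct := ((a, b) : ℍ × ℍ)

@[simp] lemma x_mk (a b : ℍ) : (mk a b).x = a := rfl
@[simp] lemma y_mk (a b : ℍ) : (mk a b).y = b := rfl
@[simp] lemma x_add (p q : Oct) : (p + q).x = p.x + q.x := rfl
@[simp] lemma y_add (p q : Oct) : (p + q).y = p.y + q.y := rfl
@[simp] lemma x_smul (r : ℝ) (p : Oct) : (r • p).x = r • p.x := rfl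
@[simp] lemma y_smul (r : ℝ) (p : Oct) : (r • p).y = r • p.y := rfl
@[simp] lemma x_zero : (0 : Oct).x = 0 := rfl
@[simp] lemma y_zero : (0 : Oct).y = 0 := rfl

@[ext] lemma ext {p q : Oct} (h1 : p.x = q.x) (h2 : p.y = q.y) : p = q :=
  Prod.ext h1 h2

/-- Cayley–Dickson multiplication: `(a,b)·(c,d) = (a·c − conj(d)·b, d·a + b·conj(c))`. -/
instance : Mul Oct :=
  ⟨fun p q => mk (p.x * q.x - star q.y * p.y) (q.y * p.x + p.y * star q.x)⟩

instance : One Oct := ⟨mk 1 0⟩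

@[simp] lemma x_mul (p q : Oct) : (p * q).x = p.x * q.x - star q.y * p.y := rfl
@[simp] lemma y_mul (p q : Oct) : (p * q).y = q.y * p.x + p.y * star q.x := rfl
@[simp] lemma x_one : (1 : Oct).x = 1 := rfl
@[simp] lemma y_one : (1 : Oct).y = 0 := rfl

instance : NonUnitalNonAssocRing Oct :=
  { (inferInstance : AddCommGroup Oct) with
    mul := (· * ·)
    left_distrib := by
      intro p q r
      refine ext ?_ ?_ <;>
        simp only [x_mul, y_mul, x_add, y_add, star_add] <;> noncomm_ring
    right_distrib := by
      intro p q r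
      refine ext ?_ ?_ <;>
        simp only [x_mul, y_mul, x_add, y_add, star_add] <;> noncomm_ring
    zero_mul := by
      intro p
      refine ext ?_ ?_ <;> simp only [x_mul, y_mul, x_zero, y_zero, star_zero] <;> simp
    mul_zero := by
      intro p
      refine ext ?_ ?_ <;> simp only [x_mul, y_mul, x_zero, y_zero, star_zero] <;> simp }

instance : SMulCommClass ℝ Oct Oct where
  smul_comm r p q := by
    show r • (p * q) = p * (r • q)
    refine ext ?_ ?_ <;>
      simp [x_mul, y_mul, smul_sub, smul_add, mul_smul_comm, smul_mul_assoc,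
        star_smul, star_trivial]

instance : IsScalarTower ℝ Oct Oct where
  smul_assoc r p q := by
    show (r • p) * q = r • (p * q)
    refine ext ?_ ?_ <;>
      simp [x_mul, y_mul, smul_sub, smul_add, mul_smul_comm, smul_mul_assoc,
        star_smul, star_trivial]

/-- Octonionic conjugation: `conj (a,b) = (conj a, −b)`. -/
def conj (p : Oct) : Oct := mk (star p.x) (-p.y)

/-- The real part of an octonion. -/
def re (p : Oct) : ℝ := p.x.re

/-- The standard basis `e_0, …, e_7` of the octonions. -/
def e : Fin 8 → Oct :=
  ![mk 1 0, mk ⟨0, 1, 0, 0⟩ 0, mk ⟨0, 0, 1, 0⟩ 0, mk ⟨0, 0, 0, 1⟩ 0,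
    mk 0 1, mk 0 ⟨0, 1, 0, 0⟩, mk 0 ⟨0, 0, 1, 0⟩, mk 0 ⟨0, 0, 0, 1⟩]

/-- The real coordinates of an octonion with respect to the standard basis. -/
def coord : Fin 8 → Oct → ℝ :=
  ![fun p => p.x.re, fun p => p.x.imI, fun p => p.x.imJ, fun p => p.x.imK,
    fun p => p.y.re, fun p => p.y.imI, fun p => p.y.imJ, fun p => p.y.imK]

lemma coord_add (j : Fin 8) (p q : Oct) :
    coord j (p + q) = coord j p + coord j q := by fin_cases j <;> rfl

lemma coord_smul (j : Fin 8) (r : ℝ) (p : Oct) :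
    coord j (r • p) = r * coord j p := by fin_cases j <;> rfl

/-- The binary "dot product" `⟨i,j⟩ = i₁j₁ + i₂j₂ + i₃j₃` of binary digits. -/
def bdot (i j : Fin 8) : ℕ :=
  ((i.val.testBit 0 && j.val.testBit 0).toNat +
   (i.val.testBit 1 && j.val.testBit 1).toNat +
   (i.val.testBit 2 && j.val.testBit 2).toNat) % 2

/-- The involution `J_i`, the ℝ-linear map determined by `J_i(e_j) = (−1)^{⟨i,j⟩} e_j`. -/
def J (i : Fin 8) : Oct →ₗ[ℝ] Oct where
  toFun p := ∑ j : Fin 8, ((-1 : ℝ) ^ bdot i j * coord j p) • e j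
  map_add' p q := by
    simp only [coord_add, mul_add, add_smul]
    rw [Finset.sum_add_distrib]
  map_smul' r p := by
    simp only [coord_smul, RingHom.id_apply, Finset.smul_sum, smul_smul, mul_left_comm]

/-- The sign `σ(j,i)` defined by `J_j(conj e_i) = (−1)^{σ(j,i)} e_i`. -/
def sigma (j i : Fin 8) : ℕ := if i = 0 then 0 else (bdot j i + 1) % 2

end Oct
namespace Oct

@[simp] lemma e_0 : e 0 = mk 1 0 := rfl
@[simp] lemma e_1 : e 1 = mk ⟨0, 1, 0, 0⟩ 0 := rfl
@[simp] lemma e_2 : e 2 = mk ⟨0, 0, 1, 0⟩ 0 := rfl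
@[simp] lemma e_3 : e 3 = mk ⟨0, 0, 0, 1⟩ 0 := rfl
@[simp] lemma e_4 : e 4 = mk 0 1 := rfl
@[simp] lemma e_5 : e 5 = mk 0 ⟨0, 1, 0, 0⟩ := rfl
@[simp] lemma e_6 : e 6 = mk 0 ⟨0, 0, 1, 0⟩ := rfl
@[simp] lemma e_7 : e 7 = mk 0 ⟨0, 0, 0, 1⟩ := rfl

@[simp] lemma coord_0 (p : Oct) : coord 0 p = p.x.re := rfl
@[simp] lemma coord_1 (p : Oct) : coord 1 p = p.x.imI := rfl
@[simp] lemma coord_2 (p : Oct) : coord 2 p = p.x.imJ := rfl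
@[simp] lemma coord_3 (p : Oct) : coord 3 p = p.x.imK := rfl
@[simp] lemma coord_4 (p : Oct) : coord 4 p = p.y.re := rfl
@[simp] lemma coord_5 (p : Oct) : coord 5 p = p.y.imI := rfl
@[simp] lemma coord_6 (p : Oct) : coord 6 p = p.y.imJ := rfl
@[simp] lemma coord_7 (p : Oct) : coord 7 p = p.y.imK := rfl

lemma coord_e (l m : Fin 8) : coord l (e m) = if l = m then 1 else 0 := by
  fin_cases l <;> fin_cases m <;> rfl

lemma sum_coord_smul_e (p : Oct) : ∑ l : Fin 8, coord l p • e l = p := by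
  refine ext ?_ ?_ <;>
    · simp only [Fin.sum_univ_eight, e_0, e_1, e_2, e_3, e_4, e_5, e_6, e_7,
        coord_0, coord_1, coord_2, coord_3, coord_4, coord_5, coord_6, coord_7,
        x_add, y_add, x_smul, y_smul, x_mk, y_mk]
      ext <;> simp only [Quaternion.re_add, Quaternion.imI_add, Quaternion.imJ_add,
          Quaternion.imK_add, Quaternion.re_smul, Quaternion.imI_smul, Quaternion.imJ_smul,
          Quaternion.imK_smul, smul_eq_mul] <;> simp [mk, x, y]

end Oct

/-- The ℝ-linear isomorphism `Φ : ℝ⁸ → 𝕆` with `Φ(b_l) = e_l`. -/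
def Phi : EuclideanSpace ℝ (Fin 8) ≃ₗ[ℝ] Oct where
  toFun v := ∑ l : Fin 8, v l • Oct.e l
  map_add' u v := by
    simp only [PiLp.add_apply, add_smul]
    rw [Finset.sum_add_distrib]
  map_smul' r v := by
    simp only [PiLp.smul_apply, smul_eq_mul, RingHom.id_apply, Finset.smul_sum, smul_smul]
  invFun p := (WithLp.toLp 2 (fun l => Oct.coord l p) : EuclideanSpace ℝ (Fin 8))
  left_inv v := by
    ext l
    fin_cases l <;>
      simp [Fin.sum_univ_eight, Oct.coord_add, Oct.coord_smul, Oct.coord_e] <;>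
        simp [Oct.mk, Oct.x, Oct.y]
  right_inv p := Oct.sum_coord_smul_e p

/-- The quadratic form `Q(v) = −‖v‖²` on ℝ⁸. -/
def Q8 : QuadraticForm ℝ (EuclideanSpace ℝ (Fin 8)) :=
  - LinearMap.BilinMap.toQuadraticMap
      (innerₗ _ : LinearMap.BilinForm ℝ (EuclideanSpace ℝ (Fin 8)))

/-- The Clifford algebra `Cl₈` of `Q(v) = −‖v‖²` on ℝ⁸. -/
abbrev Cl8 := CliffordAlgebra Q8

/-- The Clifford generators `g_l := ι(b_l)`. -/
def g (l : Fin 8) : Cl8 := CliffordAlgebra.ι Q8 (EuclideanSpace.single l 1)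

/-- The extension `J_j ⊗ id` of `J_j` to `𝕆 ⊗ Cl₈`. -/
def JT (j : Fin 8) : Oct ⊗[ℝ] Cl8 →ₗ[ℝ] Oct ⊗[ℝ] Cl8 :=
  TensorProduct.map (Oct.J j) LinearMap.id

/-- The element `Ω := Σᵢ conj(eᵢ) ⊗ gᵢ` of `𝕆 ⊗ Cl₈`. -/
def Omega : Oct ⊗[ℝ] Cl8 := ∑ i : Fin 8, (Oct.e i).conj ⊗ₜ[ℝ] g i

/-- The octonionic Witt basis `f_j := (J_j ⊗ id)(Ω)`. -/
def f (j : Fin 8) : Oct ⊗[ℝ] Cl8 := JT j Omega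

/-- The twistor vectors `X_i := Φ⁻¹(Φ(X)·conj(e_i))`. -/
def Xtw (X : EuclideanSpace ℝ (Fin 8)) (i : Fin 8) : EuclideanSpace ℝ (Fin 8) :=
  Phi.symm (Phi X * (Oct.e i).conj)

/-- The Hermitian variables `Z_j := (J_j ⊗ id)(Ω·(Φ(X) ⊗ 1))`. -/
def Z (X : EuclideanSpace ℝ (Fin 8)) (j : Fin 8) : Oct ⊗[ℝ] Cl8 :=
  JT j (Omega * (Phi X ⊗ₜ[ℝ] (1 : Cl8)))

/-! The Cayley–Dickson norm `N(a, b) = |a|² + |b|²` is multiplicative and `N ∘ Φ = ‖·‖²`, so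
polarizing `N(p q) = N(p) N(q)` in `q` shows that left multiplication by `Φ X` scales the Euclidean
inner product by `‖X‖²`. As `conj e_i = ±e_i` are orthonormal, the `X_i` are pairwise orthogonal
of length `‖X‖`, and in `Cl₈` one has `ι u ι v + ι v ι u = polar Q u v = −2⟪u, v⟫`. -/

open scoped RealInnerProductSpace

namespace Oct

@[simp] lemma x_neg (p : Oct) : (-p).x = -p.x := rfl
@[simp] lemma y_neg (p : Oct) : (-p).y = -p.y := rfl

def normSq (p : Oct) : ℝ := Quaternion.normSq p.x + Quaternion.normSq p.y

theorem normSq_mul (p q : Oct) : normSq (p * q) = normSq p * normSq q := by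
  -- the cross terms `±2 Re(a c b̄ d)` cancel because `ℍ` is associative
  simp only [normSq, x_mul, y_mul, Quaternion.normSq_def', Quaternion.re_mul,
    Quaternion.imI_mul, Quaternion.imJ_mul, Quaternion.imK_mul, Quaternion.re_sub,
    Quaternion.imI_sub, Quaternion.imJ_sub, Quaternion.imK_sub, Quaternion.re_add,
    Quaternion.imI_add, Quaternion.imJ_add, Quaternion.imK_add, Quaternion.re_star,
    Quaternion.imI_star, Quaternion.imJ_star, Quaternion.imK_star]
  ring

theorem conj_e (i : Fin 8) : conj (e i) = (if i = 0 then 1 else -1 : ℝ) • e i := by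
  fin_cases i <;> ext <;> simp [conj] <;> simp [mk, x]

end Oct

theorem norm_Phi_symm_sq (p : Oct) : ‖Phi.symm p‖ ^ 2 = Oct.normSq p := by
  have coords : ∀ l, Phi.symm p l = Oct.coord l p := fun _ => rfl
  rw [EuclideanSpace.real_norm_sq_eq, Fin.sum_univ_eight]
  simp only [coords, Oct.coord_0, Oct.coord_1, Oct.coord_2, Oct.coord_3, Oct.coord_4,
    Oct.coord_5, Oct.coord_6, Oct.coord_7, Oct.normSq, Quaternion.normSq_def']
  ring

theorem Phi_symm_e (i : Fin 8) : Phi.symm (Oct.e i) = EuclideanSpace.single i 1 := by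
  rw [LinearEquiv.symm_apply_eq]
  simp [Phi, ite_smul]

theorem inner_Phi_symm_mul_left (p a b : Oct) :
    ⟪Phi.symm (p * a), Phi.symm (p * b)⟫ = Oct.normSq p * ⟪Phi.symm a, Phi.symm b⟫ := by
  simp only [real_inner_eq_norm_add_mul_self_sub_norm_mul_self_sub_norm_mul_self_div_two,
    ← map_add, ← mul_add, ← sq, norm_Phi_symm_sq, Oct.normSq_mul]
  ring

theorem inner_Phi_symm_conj_e (i j : Fin 8) :
    ⟪Phi.symm (Oct.e i).conj, Phi.symm (Oct.e j).conj⟫ = if i = j then 1 else 0 := by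
  simp only [Oct.conj_e, map_smul, Phi_symm_e, inner_smul_left, inner_smul_right,
    EuclideanSpace.inner_single_left]
  split_ifs <;> simp_all

theorem inner_Xtw (X : EuclideanSpace ℝ (Fin 8)) (i j : Fin 8) :
    ⟪Xtw X i, Xtw X j⟫ = ‖X‖ ^ 2 * if i = j then 1 else 0 := by
  rw [Xtw, Xtw, inner_Phi_symm_mul_left, inner_Phi_symm_conj_e, ← norm_Phi_symm_sq,
    LinearEquiv.symm_apply_apply]

theorem polar_Q8 (u v : EuclideanSpace ℝ (Fin 8)) :
    QuadraticMap.polar Q8 u v = -2 * ⟪u, v⟫ := by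
  rw [Q8, FunLike.coe_neg, QuadraticMap.polar_neg, LinearMap.BilinMap.polar_toQuadraticMap,
    innerₗ_apply_apply, innerₗ_apply_apply, real_inner_comm]
  ring

/-- The twistor vectors satisfy the Clifford anticommutation relations:
`ι(Xᵢ)·ι(Xⱼ) + ι(Xⱼ)·ι(Xᵢ) = −2·‖X‖²·δᵢⱼ` in `Cl₈`. -/
theorem twistor_anticommutation (X : EuclideanSpace ℝ (Fin 8)) (i j : Fin 8) :
    CliffordAlgebra.ι Q8 (Xtw X i) * CliffordAlgebra.ι Q8 (Xtw X j)
      + CliffordAlgebra.ι Q8 (Xtw X j) * CliffordAlgebra.ι Q8 (Xtw X i)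
      = algebraMap ℝ Cl8 (-2 * ‖X‖ ^ 2 * (if i = j then 1 else 0)) := by
  rw [CliffordAlgebra.ι_mul_ι_add_swap, polar_Q8, inner_Xtw, mul_assoc]
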